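/- arXiv:1609.03088 — 2 statements merged into one kernel-verified Lean document; each statement's English description precedes it below -/
import Mathlib

section
/- For any z₀, z ∈ ℂ, |phase(z₀ + z) − phase(z₀)| ≤ 2 · 1_{|z| ≥ |z₀|/6} + (6/5) |Im(z/z₀)| (with the convention z/z₀ = 0 when z₀ = 0). -/
noncomputable section

/-- phase of a complex number: z/|z|, with phase(0)=1. -/
def phase (z : ℂ) : ℂ := if z = 0 then 1 else z / (‖z‖ : ℂ)

lemma abs_phase (u : ℂ) : ‖phase u‖ = 1 := by
  unfold phase
  split
  · simp
  · rename_i h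
    rw [norm_div]
    simp [h]

lemma key (w : ℂ) (hw : ‖w‖ < 1/6) :
    ‖phase (1 + w) - 1‖ ≤ (6/5) * |w.im| := by
  set u : ℂ := 1 + w with hu
  have hre : u.re > 5/6 := by
    have h1 : |w.re| ≤ ‖w‖ := Complex.abs_re_le_norm w
    have h5 : u.re = 1 + w.re := by rw [hu]; simp
    rw [h5]
    cases abs_le.mp h1 with
    | intro h2 h3 => linarith
  have hune : u ≠ 0 := by
    intro h
    rw [h] at hre
    norm_num at hre
  set r : ℝ := ‖u‖ with hr
  have hrpos : r > 5/6 := by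
    have h1 : u.re ≤ |u.re| := le_abs_self _
    have h2 : |u.re| ≤ r := Complex.abs_re_le_norm u
    linarith
  have hrne : (r:ℂ) ≠ 0 := by
    rw [Complex.ofReal_ne_zero]
    linarith
  have hphase : phase u = u / r := by unfold phase; rw [if_neg hune]
  have hA : ‖phase u - 1‖ = ‖u - r‖ / r := by
    rw [hphase]
    rw [show u / (r:ℂ) - 1 = (u - r) / r by field_simp]
    rw [norm_div]
    simp [abs_of_pos (by linarith : (0:ℝ) < r)]
  rw [hA]
  set A : ℝ := ‖u - r‖ with hAdef
  have hA0 : 0 ≤ A := norm_nonneg _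
  have hAsq : A^2 = (u.re - r)^2 + u.im^2 := by
    rw [hAdef, ← Complex.normSq_eq_norm_sq, Complex.normSq_apply]
    simp [pow_two]
  have hrsq : r^2 = u.re^2 + u.im^2 := by
    rw [hr, ← Complex.normSq_eq_norm_sq, Complex.normSq_apply]
    simp [pow_two]
  have him : u.im = w.im := by rw [hu]; simp
  have hm0 : 0 ≤ |w.im| := abs_nonneg _
  have him2 : u.im^2 = |w.im|^2 := by rw [him, sq_abs]
  have hge : u.re ≤ r := by nlinarith [sq_nonneg u.im]
  have h2 : 2 ≤ (36/25)*(r+u.re)*r := by nlinarith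
  have hsq : A^2 ≤ ((6/5) * |w.im| * r)^2 := by
    have key2 : (u.re - r)^2 + u.im^2 ≤ (36/25) * u.im^2 * r^2 := by
      nlinarith [mul_nonneg (mul_nonneg (sub_nonneg.mpr hge) (by linarith : (0:ℝ) ≤ r))
        (by linarith : (0:ℝ) ≤ (36/25)*(r+u.re)*r - 2)]
    calc A^2 = (u.re - r)^2 + u.im^2 := hAsq
      _ ≤ (36/25) * u.im^2 * r^2 := key2
      _ = ((6/5) * |w.im| * r)^2 := by rw [him2]; ring
  have hfin : A ≤ (6/5) * |w.im| * r := by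
    nlinarith [mul_nonneg (mul_nonneg (by norm_num : (0:ℝ) ≤ 6/5) hm0) (le_of_lt (by linarith : (0:ℝ) < r))]
  rw [div_le_iff₀ (by linarith : (0:ℝ) < r)]
  linarith

/-- Lemma: |phase(z₀+z) − phase(z₀)| ≤ 2·1_{|z| ≥ |z₀|/6} + (6/5)|Im(z/z₀)|
(with the convention z/0 = 0). -/
theorem phase_difference_bound (z₀ z : ℂ) :
    ‖phase (z₀ + z) - phase z₀‖ ≤
      2 * (if ‖z‖ ≥ ‖z₀‖ / 6 then 1 else 0) +
        (6 / 5) * |(z / z₀).im| := by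
  by_cases h : ‖z‖ ≥ ‖z₀‖ / 6
  · rw [if_pos h]
    have h1 := abs_phase (z₀ + z)
    have h2 := abs_phase z₀
    have h3 : ‖phase (z₀ + z) - phase z₀‖ ≤ 2 := by
      have ht := norm_sub_le (phase (z₀ + z)) (phase z₀)
      rw [h1, h2] at ht
      linarith
    have h4 : 0 ≤ (6/5 : ℝ) * |(z / z₀).im| := by positivity
    linarith
  · rw [if_neg h]
    push_neg at h
    have hz0 : z₀ ≠ 0 := by
      intro he
      rw [he] at h
      simp at h
      exact absurd h (norm_nonneg z).not_gt
    set w : ℂ := z / z₀ with hwdef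
    have hw : ‖w‖ < 1/6 := by
      rw [hwdef, norm_div, div_lt_iff₀ (norm_pos_iff.mpr hz0)]
      calc ‖z‖ < ‖z₀‖ / 6 := h
        _ = 1/6 * ‖z₀‖ := by ring
    have hsum : z₀ + z = z₀ * (1 + w) := by
      rw [hwdef]; field_simp
    have h1w : (1 : ℂ) + w ≠ 0 := by
      intro he
      have hw1 : w = -1 := eq_neg_of_add_eq_zero_right he
      rw [hw1] at hw
      simp at hw
      norm_num at hw
    have hmul : phase (z₀ * (1 + w)) = phase z₀ * phase (1 + w) := by
      unfold phase
      rw [if_neg (mul_ne_zero hz0 h1w), if_neg hz0, if_neg h1w]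
      rw [norm_mul]
      push_cast
      field_simp
    rw [hsum, hmul]
    have heq : phase z₀ * phase (1 + w) - phase z₀ = phase z₀ * (phase (1 + w) - 1) := by ring
    rw [heq, norm_mul, abs_phase, one_mul]
    have hk := key w hw
    linarith

end
end

section
/- Let x₀ ∈ ℂ^n with ‖x₀‖ = 1. There exists a constant C > 0 such that, for m large enough, with probability at least 1 − exp(−n m^{1/4}) over the random matrix A, the following holds: for every subset I ⊆ {1,…,m} with Card(I) ≤ n m^{1/8}, Σ_{i ∈ I} |(A x₀)_i|² ≤ C ‖x₀‖² n m^{1/4}. -/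
open MeasureTheory ProbabilityTheory Filter Matrix Finset
open scoped ENNReal NNReal Real

noncomputable section

/-- Euclidean norm of a complex vector. -/
def vnorm {k : ℕ} (v : Fin k → ℂ) : ℝ := Real.sqrt (∑ i, ‖v i‖ ^ 2)

/-- Hermitian inner product on ℂ^k. -/
def vinner {k : ℕ} (x y : Fin k → ℂ) : ℂ := ∑ i, (starRingEnd ℂ) (x i) * y i

/-- Moore–Penrose pseudoinverse, via the limit formula A† = lim_{δ→0⁺} (AᴴA + δI)⁻¹Aᴴ. -/
def pinv {m n : ℕ} (A : Matrix (Fin m) (Fin n) ℂ) : Matrix (Fin n) (Fin m) ℂ :=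
  limUnder (nhdsWithin (0:ℝ) (Set.Ioi 0))
    (fun δ : ℝ => (Aᴴ * A + (δ : ℂ) • (1 : Matrix (Fin n) (Fin n) ℂ))⁻¹ * Aᴴ)

/-- standard complex Gaussian: real and imaginary parts independent N(0,1/2). -/
def stdCGaussian : Measure ℂ :=
  ((gaussianReal 0 (1/2)).prod (gaussianReal 0 (1/2))).map
    (fun p : ℝ × ℝ => (p.1 : ℂ) + (p.2 : ℂ) * Complex.I)

instance : IsProbabilityMeasure stdCGaussian := by
  unfold stdCGaussian
  exact Measure.isProbabilityMeasure_map (by fun_prop)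

/-- law of a random m×n matrix with iid standard complex Gaussian entries. -/
def gaussMatrix (m n : ℕ) : Measure (Fin m → Fin n → ℂ) :=
  Measure.pi fun _ : Fin m => Measure.pi fun _ : Fin n => stdCGaussian

instance (m n : ℕ) : IsProbabilityMeasure (gaussMatrix m n) := by
  unfold gaussMatrix; infer_instance

/-- the vector b = |A x₀| (as a complex vector with real entries). -/
def bvec {m n : ℕ} (A : Matrix (Fin m) (Fin n) ℂ) (x₀ : Fin n → ℂ) : Fin m → ℂ :=
  fun i => (‖A.mulVec x₀ i‖ : ℂ)

/-- one step of alternating projections: z ↦ A†(b ⊙ phase(A z)). -/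
def apStep {m n : ℕ} (A : Matrix (Fin m) (Fin n) ℂ) (b : Fin m → ℂ) (z : Fin n → ℂ) :
    Fin n → ℂ :=
  (pinv A).mulVec (fun i => b i * phase (A.mulVec z i))

/-- distance to x up to global phase: inf_φ ‖e^{iφ}x₀ − x‖. -/
def pdist {k : ℕ} (x₀ x : Fin k → ℂ) : ℝ :=
  ⨅ φ : ℝ, vnorm (fun i => Complex.exp (φ * Complex.I) * x₀ i - x i)

lemma lintegral_pi_fin {α : Type*} [MeasurableSpace α] (μ : Measure α) [SigmaFinite μ] :
    ∀ (k : ℕ) (f : Fin k → α → ℝ≥0∞), (∀ i, Measurable (f i)) →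
      ∫⁻ x : Fin k → α, ∏ i, f i (x i) ∂(Measure.pi fun _ => μ) = ∏ i, ∫⁻ y, f i y ∂μ := by
  intro k
  induction k with
  | zero =>
    intro f hf
    simp [lintegral_const, Measure.pi_univ]
  | succ k ih =>
    intro f hf
    have hmp := (measurePreserving_piFinSuccAbove (fun _ : Fin (k+1) => μ) 0)
    have hmeas : Measurable (fun p : α × (Fin k → α) => f 0 p.1 * ∏ i : Fin k, f i.succ (p.2 i)) := by
      apply Measurable.mul
      · exact (hf 0).comp measurable_fst
      · exact Finset.measurable_prod _ fun i _ => (hf i.succ).comp ((measurable_pi_apply i).comp measurable_snd)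
    have h2 := hmp.lintegral_comp hmeas
    have key : ∫⁻ x : Fin (k+1) → α, ∏ i, f i (x i) ∂(Measure.pi fun _ => μ)
        = ∫⁻ b : α × (Fin k → α), f 0 b.1 * ∏ i : Fin k, f i.succ (b.2 i)
            ∂(μ.prod (Measure.pi fun _ : Fin k => μ)) := by
      rw [← h2]
      apply lintegral_congr
      intro x
      simp [MeasurableEquiv.piFinSuccAbove, Fin.prod_univ_succ, Fin.succAbove, Fin.tail]
    rw [key, lintegral_prod_mul (f := f 0) (g := fun y : Fin k → α => ∏ i : Fin k, f i.succ (y i))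
        ((hf 0).aemeasurable)
        ((Finset.measurable_prod _ fun i _ => (hf i.succ).comp (measurable_pi_apply i)).aemeasurable),
      ih _ (fun i => hf i.succ), Fin.prod_univ_succ]

lemma lintegral_gaussianHalf_ofReal {f : ℝ → ℝ} (hm : Measurable f) (h0 : ∀ x, 0 ≤ f x)
    (hi : Integrable (fun x => f x * Real.exp (-x^2))) :
    ∫⁻ x, ENNReal.ofReal (f x) ∂(gaussianReal 0 (1/2))
      = ENNReal.ofReal ((Real.sqrt π)⁻¹ * ∫ x, f x * Real.exp (-x^2)) := by
  rw [gaussianReal_of_var_ne_zero 0 (by norm_num : (1/2 : ℝ≥0) ≠ 0)]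
  rw [lintegral_withDensity_eq_lintegral_mul _ (measurable_gaussianPDF _ _) (hm.ennreal_ofReal)]
  have hpdf : ∀ x : ℝ, gaussianPDF 0 (1/2) x = ENNReal.ofReal ((Real.sqrt π)⁻¹ * Real.exp (-x^2)) := by
    intro x
    rw [gaussianPDF, gaussianPDFReal]
    congr 1
    norm_num
    rw [show Real.sqrt 2 * ((√π)⁻¹ * (√2)⁻¹) = (√π)⁻¹ * (√2 * (√2)⁻¹) by ring,
      mul_inv_cancel₀ (by positivity : (√2:ℝ) ≠ 0), mul_one]
  have heq : ∀ x : ℝ, (gaussianPDF 0 (1/2) * fun x => ENNReal.ofReal (f x)) x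
      = ENNReal.ofReal ((Real.sqrt π)⁻¹ * (f x * Real.exp (-x^2))) := by
    intro x
    simp only [Pi.mul_apply, hpdf x]
    rw [← ENNReal.ofReal_mul (by positivity)]
    congr 1
    ring
  simp_rw [heq]
  rw [← ofReal_integral_eq_lintegral_ofReal (hi.const_mul _)
    (Filter.Eventually.of_forall fun x => mul_nonneg (by positivity) (mul_nonneg (h0 x) (Real.exp_pos _).le))]
  rw [integral_const_mul]

lemma lintegral_exp_mul_gaussianHalf (t : ℝ) :
    ∫⁻ x, ENNReal.ofReal (Real.exp (t * x)) ∂(gaussianReal 0 (1/2))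
      = ENNReal.ofReal (Real.exp (t^2/4)) := by
  have hptw : ∀ x : ℝ, Real.exp (t * x) * Real.exp (-x^2)
      = Real.exp (t^2/4) * Real.exp (-1 * (x - t/2)^2) := by
    intro x
    rw [← Real.exp_add, ← Real.exp_add]
    congr 1
    ring
  have hi : Integrable (fun x => Real.exp (t * x) * Real.exp (-x^2)) := by
    simp_rw [hptw]
    exact (((integrable_exp_neg_mul_sq one_pos).comp_sub_right (t/2))).const_mul _
  rw [lintegral_gaussianHalf_ofReal (by fun_prop) (fun x => (Real.exp_pos _).le) hi]
  have hint : ∫ x, Real.exp (t * x) * Real.exp (-x^2)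
      = Real.exp (t^2/4) * Real.sqrt π := by
    simp_rw [hptw]
    rw [integral_const_mul]
    congr 1
    rw [integral_sub_right_eq_self (fun x => Real.exp (-1 * x^2)) (t/2),
      integral_gaussian 1, div_one]
  rw [hint, show (√π)⁻¹ * (Real.exp (t^2/4) * √π) = Real.exp (t^2/4) * ((√π)⁻¹ * √π) by ring,
    inv_mul_cancel₀ (by positivity : (√π:ℝ) ≠ 0), mul_one]

lemma lintegral_exp_sq_half_gaussianHalf :
    ∫⁻ x, ENNReal.ofReal (Real.exp (x^2/2)) ∂(gaussianReal 0 (1/2))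
      = ENNReal.ofReal (Real.sqrt 2) := by
  have hptw : ∀ x : ℝ, Real.exp (x^2/2) * Real.exp (-x^2) = Real.exp (-(1/2) * x^2) := by
    intro x
    rw [← Real.exp_add]
    congr 1
    ring
  have hi : Integrable (fun x => Real.exp (x^2/2) * Real.exp (-x^2)) := by
    simp_rw [hptw]
    exact integrable_exp_neg_mul_sq (by norm_num)
  rw [lintegral_gaussianHalf_ofReal (by fun_prop) (fun x => (Real.exp_pos _).le) hi]
  have hint : ∫ x, Real.exp (x^2/2) * Real.exp (-x^2) = Real.sqrt 2 * Real.sqrt π := by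
    simp_rw [hptw]
    rw [integral_gaussian (1/2), show π / (1/2) = 2 * π by ring, Real.sqrt_mul (by norm_num)]
  rw [hint, show (√π)⁻¹ * (Real.sqrt 2 * √π) = Real.sqrt 2 * ((√π)⁻¹ * √π) by ring,
    inv_mul_cancel₀ (by positivity : (√π:ℝ) ≠ 0), mul_one]

lemma lintegral_stdC {g : ℂ → ℝ≥0∞} (hg : Measurable g) :
    ∫⁻ z, g z ∂stdCGaussian
      = ∫⁻ p : ℝ × ℝ, g ((p.1 : ℂ) + (p.2 : ℂ) * Complex.I)
          ∂((gaussianReal 0 (1/2)).prod (gaussianReal 0 (1/2))) :=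
  lintegral_map hg (by fun_prop)

lemma lintegral_linMGF_stdC (a : ℂ) :
    ∫⁻ z, ENNReal.ofReal (Real.exp (Real.sqrt 2 * (a.re * z.re + a.im * z.im))) ∂stdCGaussian
      = ENNReal.ofReal (Real.exp (‖a‖ ^ 2 / 2)) := by
  rw [lintegral_stdC (by fun_prop)]
  have hre : ∀ p : ℝ × ℝ, ((p.1 : ℂ) + (p.2 : ℂ) * Complex.I).re = p.1 := by intro p; simp
  have him : ∀ p : ℝ × ℝ, ((p.1 : ℂ) + (p.2 : ℂ) * Complex.I).im = p.2 := by intro p; simp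
  have key : ∀ p : ℝ × ℝ,
      ENNReal.ofReal (Real.exp (Real.sqrt 2 * (a.re * ((p.1:ℂ) + (p.2:ℂ)*Complex.I).re
        + a.im * ((p.1:ℂ) + (p.2:ℂ)*Complex.I).im)))
      = ENNReal.ofReal (Real.exp ((Real.sqrt 2 * a.re) * p.1))
        * ENNReal.ofReal (Real.exp ((Real.sqrt 2 * a.im) * p.2)) := by
    intro p
    rw [hre, him, ← ENNReal.ofReal_mul (Real.exp_pos _).le, ← Real.exp_add]
    congr 2
    ring
  simp_rw [key]
  rw [lintegral_prod_mul (f := fun x : ℝ => ENNReal.ofReal (Real.exp (Real.sqrt 2 * a.re * x)))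
      (g := fun y : ℝ => ENNReal.ofReal (Real.exp (Real.sqrt 2 * a.im * y)))
      (by fun_prop) (by fun_prop),
    lintegral_exp_mul_gaussianHalf, lintegral_exp_mul_gaussianHalf,
    ← ENNReal.ofReal_mul (Real.exp_pos _).le, ← Real.exp_add]
  congr 1
  have h2 : (Real.sqrt 2) ^ 2 = 2 := Real.sq_sqrt (by norm_num)
  have : ‖a‖ ^ 2 = a.re ^ 2 + a.im ^ 2 := by
    rw [Complex.sq_norm, Complex.normSq_apply]; ring
  rw [this]
  have harg : (Real.sqrt 2 * a.re) ^ 2 / 4 + (Real.sqrt 2 * a.im) ^ 2 / 4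
      = (a.re ^ 2 + a.im ^ 2) / 2 := by nlinarith [h2]
  rw [harg]

lemma lintegral_sqMGF_stdC :
    ∫⁻ z, ENNReal.ofReal (Real.exp (‖z‖ ^ 2 / 2)) ∂stdCGaussian = 2 := by
  have hg : Measurable fun z : ℂ => ENNReal.ofReal (Real.exp (‖z‖ ^ 2 / 2)) := by
    exact (Real.continuous_exp.comp
      ((continuous_norm.pow 2).div_const 2)).measurable.ennreal_ofReal
  rw [lintegral_stdC hg]
  have key : ∀ p : ℝ × ℝ,
      ENNReal.ofReal (Real.exp (‖(p.1:ℂ) + (p.2:ℂ)*Complex.I‖ ^ 2 / 2))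
      = ENNReal.ofReal (Real.exp (p.1^2/2)) * ENNReal.ofReal (Real.exp (p.2^2/2)) := by
    intro p
    rw [← ENNReal.ofReal_mul (Real.exp_pos _).le, ← Real.exp_add]
    congr 2
    have : ‖(p.1:ℂ) + (p.2:ℂ)*Complex.I‖ ^ 2 = p.1 ^ 2 + p.2 ^ 2 := by
      rw [Complex.sq_norm, Complex.normSq_apply]
      simp
      ring
    rw [this]
    ring
  simp_rw [key]
  rw [lintegral_prod_mul (f := fun x : ℝ => ENNReal.ofReal (Real.exp (x^2/2)))
      (g := fun y : ℝ => ENNReal.ofReal (Real.exp (y^2/2))) (by fun_prop) (by fun_prop),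
    lintegral_exp_sq_half_gaussianHalf, ← ENNReal.ofReal_mul (Real.sqrt_nonneg _),
    Real.mul_self_sqrt (by norm_num)]
  norm_num

lemma row_MGF {n : ℕ} (x : Fin n → ℂ) (hx : ∑ j, ‖x j‖ ^ 2 = 1) :
    ∫⁻ g : Fin n → ℂ, ENNReal.ofReal (Real.exp (‖∑ j, g j * x j‖ ^ 2 / 2))
      ∂(Measure.pi fun _ : Fin n => stdCGaussian) = 2 := by
  -- Step 1: pointwise linearization
  have step1 : ∀ g : Fin n → ℂ,
      ENNReal.ofReal (Real.exp (‖∑ j, g j * x j‖ ^ 2 / 2))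
        = ∫⁻ u, ENNReal.ofReal (Real.exp (Real.sqrt 2 *
            ((∑ j, g j * x j).re * u.re + (∑ j, g j * x j).im * u.im))) ∂stdCGaussian :=
    fun g => (lintegral_linMGF_stdC (∑ j, g j * x j)).symm
  simp_rw [step1]
  -- Step 2: swap
  have hw : Measurable fun q : (Fin n → ℂ) × ℂ => ∑ j, q.1 j * x j := by fun_prop
  have hF : AEMeasurable (fun q : (Fin n → ℂ) × ℂ =>
      ENNReal.ofReal (Real.exp (Real.sqrt 2 * ((∑ j, q.1 j * x j).re * q.2.re
        + (∑ j, q.1 j * x j).im * q.2.im)))) ((Measure.pi fun _ : Fin n => stdCGaussian).prod stdCGaussian) := by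
    apply Measurable.aemeasurable
    apply Measurable.ennreal_ofReal
    apply (Real.measurable_exp.comp)
    apply Measurable.const_mul
    exact ((Complex.measurable_re.comp hw).mul
        (Complex.measurable_re.comp measurable_snd)).add
      ((Complex.measurable_im.comp hw).mul (Complex.measurable_im.comp measurable_snd))
  rw [lintegral_lintegral_swap hF]
  -- Step 3: inner integral for fixed u
  have step3 : ∀ u : ℂ,
      (∫⁻ g : Fin n → ℂ, ENNReal.ofReal (Real.exp (Real.sqrt 2 *
          ((∑ j, g j * x j).re * u.re + (∑ j, g j * x j).im * u.im))) ∂(Measure.pi fun _ : Fin n => stdCGaussian))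
        = ENNReal.ofReal (Real.exp (‖u‖ ^ 2 / 2)) := by
    intro u
    have hpt : ∀ g : Fin n → ℂ,
        ENNReal.ofReal (Real.exp (Real.sqrt 2 *
          ((∑ j, g j * x j).re * u.re + (∑ j, g j * x j).im * u.im)))
        = ∏ j, ENNReal.ofReal (Real.exp (Real.sqrt 2 *
            ((u * (starRingEnd ℂ) (x j)).re * (g j).re
              + (u * (starRingEnd ℂ) (x j)).im * (g j).im))) := by
      intro g
      rw [← ENNReal.ofReal_prod_of_nonneg (fun j _ => (Real.exp_pos _).le),
        ← Real.exp_sum, ← Finset.mul_sum]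
      congr 2
      congr 1
      rw [Complex.re_sum, Complex.im_sum, Finset.sum_mul, Finset.sum_mul,
        ← Finset.sum_add_distrib]
      apply Finset.sum_congr rfl
      intro j _
      simp only [Complex.mul_re, Complex.mul_im, Complex.conj_re, Complex.conj_im]
      ring
    simp_rw [hpt]
    rw [lintegral_pi_fin stdCGaussian n (fun j z => ENNReal.ofReal (Real.exp (Real.sqrt 2 * ((u * (starRingEnd ℂ) (x j)).re * z.re + (u * (starRingEnd ℂ) (x j)).im * z.im)))) (fun j => by
      apply Measurable.ennreal_ofReal
      apply Real.measurable_exp.comp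
      apply Measurable.const_mul
      exact ((measurable_const.mul Complex.measurable_re).add
        (measurable_const.mul Complex.measurable_im)))]
    have heach : ∀ j, (∫⁻ z, ENNReal.ofReal (Real.exp (Real.sqrt 2 *
        ((u * (starRingEnd ℂ) (x j)).re * z.re + (u * (starRingEnd ℂ) (x j)).im * z.im))) ∂stdCGaussian)
        = ENNReal.ofReal (Real.exp (‖u‖ ^ 2 * ‖x j‖ ^ 2 / 2)) := by
      intro j
      rw [lintegral_linMGF_stdC (u * (starRingEnd ℂ) (x j))]
      congr 2
      rw [norm_mul, Complex.norm_conj]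
      ring
    simp_rw [heach]
    rw [← ENNReal.ofReal_prod_of_nonneg (fun j _ => (Real.exp_pos _).le), ← Real.exp_sum]
    congr 2
    rw [← Finset.sum_div, ← Finset.mul_sum, hx, mul_one]
  simp_rw [step3]
  rw [lintegral_sqMGF_stdC]

lemma measurable_rowfun {n : ℕ} (x : Fin n → ℂ) :
    Measurable fun r : Fin n → ℂ =>
      ENNReal.ofReal (Real.exp (‖∑ j, r j * x j‖ ^ 2 / 2)) := by
  have hsum : Measurable fun r : Fin n → ℂ => ∑ j, r j * x j := by fun_prop
  exact (Real.measurable_exp.comp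
    (((continuous_norm.measurable.comp hsum).pow_const 2).div_const 2)).ennreal_ofReal

lemma matrix_MGF {m n : ℕ} (x : Fin n → ℂ) (hx : ∑ j, ‖x j‖ ^ 2 = 1)
    (I : Finset (Fin m)) :
    ∫⁻ ω : Fin m → Fin n → ℂ,
        ENNReal.ofReal (Real.exp ((∑ i ∈ I, ‖∑ j, ω i j * x j‖ ^ 2) / 2))
      ∂(gaussMatrix m n) = 2 ^ I.card := by
  classical
  have hptw : ∀ ω : Fin m → Fin n → ℂ,
      ENNReal.ofReal (Real.exp ((∑ i ∈ I, ‖∑ j, ω i j * x j‖ ^ 2) / 2))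
      = ∏ i : Fin m, (fun i (r : Fin n → ℂ) => if i ∈ I then
          ENNReal.ofReal (Real.exp (‖∑ j, r j * x j‖ ^ 2 / 2)) else 1) i (ω i) := by
    intro ω
    rw [Finset.prod_ite_mem, Finset.univ_inter,
      ← ENNReal.ofReal_prod_of_nonneg (fun i _ => (Real.exp_pos _).le), ← Real.exp_sum,
      Finset.sum_div]
  simp_rw [hptw]
  rw [gaussMatrix, lintegral_pi_fin _ m (fun i (r : Fin n → ℂ) => if i ∈ I then
      ENNReal.ofReal (Real.exp (‖∑ j, r j * x j‖ ^ 2 / 2)) else 1) (fun i => by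
    by_cases hi : i ∈ I
    · simpa [hi] using measurable_rowfun x
    · simp [hi])]
  have heach : ∀ i : Fin m, (∫⁻ r : Fin n → ℂ, (if i ∈ I then
      ENNReal.ofReal (Real.exp (‖∑ j, r j * x j‖ ^ 2 / 2)) else 1)
        ∂(Measure.pi fun _ : Fin n => stdCGaussian)) = if i ∈ I then 2 else 1 := by
    intro i
    by_cases hi : i ∈ I
    · simp only [hi, if_true]
      exact row_MGF x hx
    · simp [hi]
  simp_rw [heach]
  rw [Finset.prod_ite_mem, Finset.univ_inter, Finset.prod_const]

lemma tail_bound {m n : ℕ} (x : Fin n → ℂ) (hx : ∑ j, ‖x j‖ ^ 2 = 1)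
    (I : Finset (Fin m)) (t : ℝ) :
    gaussMatrix m n {ω | t < ∑ i ∈ I, ‖∑ j, ω i j * x j‖ ^ 2}
      ≤ ENNReal.ofReal (Real.exp (-(t/2))) * 2 ^ I.card := by
  set f : (Fin m → Fin n → ℂ) → ℝ≥0∞ := fun ω =>
    ENNReal.ofReal (Real.exp ((∑ i ∈ I, ‖∑ j, ω i j * x j‖ ^ 2) / 2)) with hf
  have hfm : AEMeasurable f (gaussMatrix m n) := by
    apply Measurable.aemeasurable
    apply Measurable.ennreal_ofReal
    apply Real.measurable_exp.comp
    apply Measurable.div_const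
    apply Finset.measurable_sum
    intro i _
    have hsum : Measurable fun ω : Fin m → Fin n → ℂ => ∑ j, ω i j * x j := by fun_prop
    exact (continuous_norm.measurable.comp hsum).pow_const 2
  set ε : ℝ≥0∞ := ENNReal.ofReal (Real.exp (t/2)) with hε
  have hε0 : ε ≠ 0 := by simp [hε, Real.exp_pos]
  have hεtop : ε ≠ ⊤ := ENNReal.ofReal_ne_top
  have hsub : {ω : Fin m → Fin n → ℂ | t < ∑ i ∈ I, ‖∑ j, ω i j * x j‖ ^ 2}
      ⊆ {ω | ε ≤ f ω} := by
    intro ω hω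
    simp only [Set.mem_setOf_eq] at hω ⊢
    rw [hε, hf]
    exact ENNReal.ofReal_le_ofReal (Real.exp_le_exp.mpr (by linarith))
  have markov := mul_meas_ge_le_lintegral₀ hfm ε
  have hlint : ∫⁻ ω, f ω ∂(gaussMatrix m n) = 2 ^ I.card := matrix_MGF x hx I
  calc gaussMatrix m n {ω | t < ∑ i ∈ I, ‖∑ j, ω i j * x j‖ ^ 2}
      ≤ gaussMatrix m n {ω | ε ≤ f ω} := measure_mono hsub
    _ = ε⁻¹ * (ε * gaussMatrix m n {ω | ε ≤ f ω}) := by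
        rw [← mul_assoc, ENNReal.inv_mul_cancel hε0 hεtop, one_mul]
    _ ≤ ε⁻¹ * 2 ^ I.card := by
        apply mul_le_mul_right
        rw [← hlint]
        exact markov
    _ = ENNReal.ofReal (Real.exp (-(t/2))) * 2 ^ I.card := by
        congr 1
        rw [Real.exp_neg, hε, ← ENNReal.ofReal_inv_of_pos (Real.exp_pos _)]

lemma real_ineq (n m : ℕ) (hn : 1 ≤ n) (hm : 1 ≤ m) (k : ℕ)
    (hk : (k : ℝ) ≤ (n : ℝ) * (m : ℝ) ^ ((1:ℝ)/8)) :
    (m.choose k : ℝ) * 2 ^ k * Real.exp (-(18 * ((n:ℝ) * (m:ℝ) ^ ((1:ℝ)/4)) / 2))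
      ≤ Real.exp (-(n : ℝ) * (m : ℝ) ^ ((1:ℝ)/4)) := by
  have hm0 : (0:ℝ) < m := by exact_mod_cast hm
  have hm8 : (0:ℝ) < (m:ℝ) ^ ((1:ℝ)/8) := Real.rpow_pos_of_pos hm0 _
  have hm1 : (1:ℝ) ≤ (m:ℝ) := by exact_mod_cast hm
  have h2m : (1:ℝ) ≤ 2 * m := by linarith
  have hlog : Real.log (2 * m) ≤ 8 * (m:ℝ) ^ ((1:ℝ)/8) := by
    rw [Real.log_mul (by norm_num) (by positivity)]
    have h1 : Real.log 2 ≤ 1 := by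
      have := Real.log_le_sub_one_of_pos (by norm_num : (0:ℝ) < 2)
      linarith
    have h2 : Real.log (m:ℝ) ≤ 8 * (m:ℝ) ^ ((1:ℝ)/8) - 8 := by
      have hl : Real.log ((m:ℝ) ^ ((1:ℝ)/8)) ≤ (m:ℝ) ^ ((1:ℝ)/8) - 1 :=
        Real.log_le_sub_one_of_pos hm8
      rw [Real.log_rpow hm0] at hl
      linarith
    linarith
  have hlog0 : 0 ≤ Real.log (2 * m) := Real.log_nonneg h2m
  have hkey : (k : ℝ) * Real.log (2 * m) ≤ 8 * (n : ℝ) * (m : ℝ) ^ ((1:ℝ)/4) := by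
    have := mul_le_mul hk hlog hlog0 (by positivity)
    have hmm : (m:ℝ) ^ ((1:ℝ)/8) * (m:ℝ) ^ ((1:ℝ)/8) = (m:ℝ) ^ ((1:ℝ)/4) := by
      rw [← Real.rpow_add hm0]
      norm_num
    nlinarith [this]
  have hcb : (m.choose k : ℝ) * 2 ^ k ≤ Real.exp ((k : ℝ) * Real.log (2 * m)) := by
    have h1 : (m.choose k : ℝ) ≤ (m : ℝ) ^ k := by
      exact_mod_cast Nat.choose_le_pow m k
    have h2 : (m.choose k : ℝ) * 2 ^ k ≤ (2 * m : ℝ) ^ k := by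
      rw [mul_pow]
      calc (m.choose k : ℝ) * 2 ^ k ≤ (m:ℝ)^k * 2^k := by
            apply mul_le_mul_of_nonneg_right h1 (by positivity)
        _ = 2^k * (m:ℝ)^k := by ring
    refine h2.trans (le_of_eq ?_)
    rw [Real.exp_nat_mul, Real.exp_log (show (0:ℝ) < 2*m by linarith)]
  have hnn : (0:ℝ) ≤ (m.choose k : ℝ) * 2 ^ k := by positivity
  calc (m.choose k : ℝ) * 2 ^ k * Real.exp (-(18 * ((n:ℝ) * (m:ℝ) ^ ((1:ℝ)/4)) / 2))
      ≤ Real.exp ((k : ℝ) * Real.log (2 * m))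
          * Real.exp (-(18 * ((n:ℝ) * (m:ℝ) ^ ((1:ℝ)/4)) / 2)) := by
        apply mul_le_mul_of_nonneg_right hcb (Real.exp_pos _).le
    _ = Real.exp ((k : ℝ) * Real.log (2 * m) - 9 * ((n:ℝ) * (m:ℝ) ^ ((1:ℝ)/4))) := by
        rw [← Real.exp_add]; congr 1; ring
    _ ≤ Real.exp (-(n : ℝ) * (m : ℝ) ^ ((1:ℝ)/4)) := by
        apply Real.exp_le_exp.mpr
        nlinarith [hkey]

/-- Lemma: for ‖x₀‖ = 1 and m large enough, with probability ≥ 1 − exp(−n m^{1/4}), every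
I ⊆ {1,…,m} with card(I) ≤ n m^{1/8} satisfies Σ_{i∈I} |(Ax₀)_i|² ≤ C ‖x₀‖² n m^{1/4}. -/
theorem sum_over_small_subsets_bound :
    ∃ C : ℝ, 0 < C ∧ ∃ M : ℕ,
      ∀ n m : ℕ, 0 < n → 0 < m → M ≤ m → ∀ x₀ : Fin n → ℂ, vnorm x₀ = 1 →
        gaussMatrix m n
            {ω | ∀ I : Finset (Fin m),
              (I.card : ℝ) ≤ (n : ℝ) * (m : ℝ) ^ ((1 : ℝ) / 8) →
              ∑ i ∈ I, ‖(Matrix.of ω).mulVec x₀ i‖ ^ 2 ≤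
                C * vnorm x₀ ^ 2 * n * (m : ℝ) ^ ((1 : ℝ) / 4)} ≥
          ENNReal.ofReal (1 - Real.exp (-(n : ℝ) * (m : ℝ) ^ ((1 : ℝ) / 4))) := by
  classical
  refine ⟨18, by norm_num, 1, ?_⟩
  intro n m hn hm hMm x₀ hx₀
  have hx : ∑ j, ‖x₀ j‖ ^ 2 = 1 := by
    have h0 : 0 ≤ ∑ j, ‖x₀ j‖ ^ 2 :=
      Finset.sum_nonneg fun j _ => by positivity
    have := hx₀
    rw [vnorm] at this
    nlinarith [Real.sq_sqrt h0, this]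
  -- abbreviations
  set K : ℝ := (n : ℝ) * (m : ℝ) ^ ((1 : ℝ) / 8) with hK
  set t : ℝ := 18 * ((n:ℝ) * (m:ℝ) ^ ((1:ℝ)/4)) with ht
  have hK0 : 0 ≤ K := by positivity
  set k₀ : ℕ := min (Nat.floor K) m with hk₀
  have hk₀m : k₀ ≤ m := min_le_right _ _
  have hk₀K : (k₀ : ℝ) ≤ K := le_trans (by exact_mod_cast min_le_left _ _) (Nat.floor_le hK0)
  -- the mulVec is the explicit sum
  have hmv : ∀ (ω : Fin m → Fin n → ℂ) (i : Fin m),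
      ‖(Matrix.of ω).mulVec x₀ i‖ = ‖∑ j, ω i j * x₀ j‖ := by
    intro ω i
    rfl
  -- bad events
  set bad : Finset (Fin m) → Set (Fin m → Fin n → ℂ) :=
    fun I => {ω | t < ∑ i ∈ I, ‖∑ j, ω i j * x₀ j‖ ^ 2} with hbad
  have hbadMeas : ∀ I : Finset (Fin m), MeasurableSet (bad I) := by
    intro I
    have hS : Measurable fun ω : Fin m → Fin n → ℂ =>
        ∑ i ∈ I, ‖∑ j, ω i j * x₀ j‖ ^ 2 := by
      apply Finset.measurable_sum
      intro i _
      have hsum : Measurable fun ω : Fin m → Fin n → ℂ => ∑ j, ω i j * x₀ j := by fun_prop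
      exact (continuous_norm.measurable.comp hsum).pow_const 2
    exact measurableSet_lt measurable_const hS
  set B : Set (Fin m → Fin n → ℂ) :=
    ⋃ I ∈ Finset.powersetCard k₀ (Finset.univ : Finset (Fin m)), bad I with hB
  have hBMeas : MeasurableSet B :=
    MeasurableSet.biUnion (Finset.powersetCard k₀ Finset.univ).countable_toSet
      (fun I _ => hbadMeas I)
  -- complement of B is contained in the good event
  have hsub : Bᶜ ⊆ {ω : Fin m → Fin n → ℂ | ∀ I : Finset (Fin m),
      (I.card : ℝ) ≤ (n : ℝ) * (m : ℝ) ^ ((1 : ℝ) / 8) →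
      ∑ i ∈ I, ‖(Matrix.of ω).mulVec x₀ i‖ ^ 2 ≤
        18 * vnorm x₀ ^ 2 * n * (m : ℝ) ^ ((1 : ℝ) / 4)} := by
    intro ω hω
    simp only [Set.mem_setOf_eq]
    intro I hIcard
    have hIk : I.card ≤ k₀ := by
      refine le_min (Nat.le_floor ?_) ?_
      · exact_mod_cast hIcard
      · simpa using Finset.card_le_univ I
    obtain ⟨I', hII', _, hI'card⟩ := Finset.exists_subsuperset_card_eq
      (Finset.subset_univ I) hIk (by simpa using hk₀m)
    have hnotbad : ω ∉ bad I' := by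
      intro hmem
      apply hω
      exact Set.mem_biUnion (Finset.mem_powersetCard.mpr ⟨Finset.subset_univ _, hI'card⟩) hmem
    have hle : ∑ i ∈ I', ‖∑ j, ω i j * x₀ j‖ ^ 2 ≤ t := not_lt.mp hnotbad
    have hmono : ∑ i ∈ I, ‖∑ j, ω i j * x₀ j‖ ^ 2
        ≤ ∑ i ∈ I', ‖∑ j, ω i j * x₀ j‖ ^ 2 :=
      Finset.sum_le_sum_of_subset_of_nonneg hII' (fun i _ _ => by positivity)
    have hfinal : ∑ i ∈ I, ‖(Matrix.of ω).mulVec x₀ i‖ ^ 2 ≤ t := by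
      simp_rw [hmv]
      exact hmono.trans hle
    refine hfinal.trans (le_of_eq ?_)
    rw [hx₀, ht]
    ring
  -- measure of B
  have hcard : (Finset.powersetCard k₀ (Finset.univ : Finset (Fin m))).card = m.choose k₀ := by
    rw [Finset.card_powersetCard, Finset.card_univ, Fintype.card_fin]
  have hBbound : gaussMatrix m n B
      ≤ ENNReal.ofReal (Real.exp (-(n : ℝ) * (m : ℝ) ^ ((1 : ℝ) / 4))) := by
    have h1 : gaussMatrix m n B ≤ ∑ I ∈ Finset.powersetCard k₀ (Finset.univ : Finset (Fin m)),
        gaussMatrix m n (bad I) := measure_biUnion_finset_le _ _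
    have h2 : ∀ I ∈ Finset.powersetCard k₀ (Finset.univ : Finset (Fin m)),
        gaussMatrix m n (bad I) ≤ ENNReal.ofReal (Real.exp (-(t/2))) * 2 ^ k₀ := by
      intro I hI
      have hIcard : I.card = k₀ := (Finset.mem_powersetCard.mp hI).2
      simpa [hIcard] using tail_bound x₀ hx I t
    have h3 : gaussMatrix m n B
        ≤ (m.choose k₀ : ℝ≥0∞) * (ENNReal.ofReal (Real.exp (-(t/2))) * 2 ^ k₀) := by
      refine h1.trans ?_
      calc ∑ I ∈ Finset.powersetCard k₀ (Finset.univ : Finset (Fin m)), gaussMatrix m n (bad I)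
          ≤ ∑ _I ∈ Finset.powersetCard k₀ (Finset.univ : Finset (Fin m)),
            (ENNReal.ofReal (Real.exp (-(t/2))) * 2 ^ k₀) := Finset.sum_le_sum h2
        _ = (m.choose k₀ : ℝ≥0∞) * (ENNReal.ofReal (Real.exp (-(t/2))) * 2 ^ k₀) := by
            rw [Finset.sum_const, hcard, nsmul_eq_mul]
    refine h3.trans ?_
    have hconv : (m.choose k₀ : ℝ≥0∞) * (ENNReal.ofReal (Real.exp (-(t/2))) * 2 ^ k₀)
        = ENNReal.ofReal ((m.choose k₀ : ℝ) * 2 ^ k₀ * Real.exp (-(t/2))) := by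
      rw [ENNReal.ofReal_mul (mul_nonneg (Nat.cast_nonneg _) (by positivity)),
        ENNReal.ofReal_mul (Nat.cast_nonneg _), ENNReal.ofReal_natCast,
        ENNReal.ofReal_pow (by norm_num : (0:ℝ) ≤ 2), ENNReal.ofReal_ofNat]
      ring
    rw [hconv]
    apply ENNReal.ofReal_le_ofReal
    exact real_ineq n m hn hm k₀ hk₀K
  -- conclude
  have hcompl : gaussMatrix m n Bᶜ = 1 - gaussMatrix m n B :=
    prob_compl_eq_one_sub hBMeas
  have hfin : ENNReal.ofReal (1 - Real.exp (-(n : ℝ) * (m : ℝ) ^ ((1 : ℝ) / 4)))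
      ≤ gaussMatrix m n Bᶜ := by
    rw [hcompl, ENNReal.ofReal_sub _ (Real.exp_pos _).le, ENNReal.ofReal_one]
    exact tsub_le_tsub_left hBbound 1
  exact le_trans hfin (measure_mono hsub)

end
end
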